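/- For any link e = {v,w} of Γ, the inequality Σ_{u ∈ V∖{v,w}} x_u ≥ 0 defines a face of P(Γ) whose vertices are exactly χ(∅), χ({v}), χ({w}) and χ({v,w}); in particular this face is 2-dimensional and χ({v,w}) is the unique vertex of P(Γ) other than χ(∅), χ({v}), χ({w}) lying on it. -/

import Mathlib

open Set

noncomputable section

variable {V : Type*}

/-- Characteristic vector of a set of nodes. -/
def chi (S : Set V) : V → ℝ := S.indicator (fun _ => (1 : ℝ))

/-- The candidate vertex set of the polytope `P(Γ)`. -/
def polyVerts (G : SimpleGraph V) : Set (V → ℝ) :=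
  {x | x = chi (∅ : Set V) ∨ (∃ v : V, x = chi {v}) ∨
        (∃ u w : V, G.Adj u w ∧ x = chi {u, w})}

/-- The polytope `P(Γ)`. -/
def poly (G : SimpleGraph V) : Set (V → ℝ) := convexHull ℝ (polyVerts G)

/-- Two points are adjacent vertices of a convex set `P` when the segment
joining them is a (1-dimensional) face, i.e. an extreme subset of `P`. -/
def AdjVert (P : Set (V → ℝ)) (p q : V → ℝ) : Prop :=
  p ≠ q ∧ IsExtreme ℝ P (segment ℝ p q)

/-- A combinatorial automorphism of `P`: a bijection of the vertex (extreme point)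
set of `P` mapping the vertex set of each face onto the vertex set of some face. -/
def IsCombAut (P : Set (V → ℝ)) (σ : (V → ℝ) → (V → ℝ)) : Prop :=
  Set.BijOn σ (P.extremePoints ℝ) (P.extremePoints ℝ) ∧
  ∀ F : Set (V → ℝ), IsExtreme ℝ P F →
    ∃ F' : Set (V → ℝ), IsExtreme ℝ P F' ∧
      σ '' (F ∩ P.extremePoints ℝ) = F' ∩ P.extremePoints ℝ

/-- An automorphism of the skeleton of `P`: a bijection of the vertex set of `P`
preserving adjacency (in both directions). -/
def IsSkelAut (P : Set (V → ℝ)) (σ : (V → ℝ) → (V → ℝ)) : Prop :=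
  Set.BijOn σ (P.extremePoints ℝ) (P.extremePoints ℝ) ∧
  ∀ p ∈ P.extremePoints ℝ, ∀ q ∈ P.extremePoints ℝ,
    (AdjVert P p q ↔ AdjVert P (σ p) (σ q))

/-!
All points of `P(Γ)` have nonnegative coordinates, so the coordinate sum over `V ∖ {v, w}` is
nonnegative on `P(Γ)` and its zero set is a face. Every `χ(S)` is a 0/1 point of the unit cube
containing `P(Γ)`, hence a vertex, and `χ(S)` lies on the face iff `S ⊆ {v, w}`. Finally every
point of the face is supported on `{v, w}`, so the face spans the plane of `χ({v})` and `χ({w})`.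
-/

theorem isExtreme_setOf_eq_zero {𝕜 E : Type*} [CommRing 𝕜] [LinearOrder 𝕜]
    [IsStrictOrderedRing 𝕜] [AddCommGroup E] [Module 𝕜 E] {A : Set E} (f : E →ₗ[𝕜] 𝕜)
    (hf : ∀ x ∈ A, 0 ≤ f x) : IsExtreme 𝕜 A {x ∈ A | f x = 0} := by
  refine ⟨sep_subset _ _, ?_⟩
  rintro x₁ hx₁ x₂ hx₂ x ⟨-, hx⟩ ⟨a, b, ha, hb, -, rfl⟩
  simp only [map_add, map_smul, smul_eq_mul] at hx
  have := hf x₁ hx₁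
  have := hf x₂ hx₂
  exact ⟨hx₁, by nlinarith⟩

theorem mem_extremePoints_of_subset_cube {ι : Type*} {A : Set (ι → ℝ)} {x : ι → ℝ}
    (hA : A ⊆ univ.pi fun _ => Icc 0 1) (hx : x ∈ A) (h01 : ∀ i, x i = 0 ∨ x i = 1) :
    x ∈ A.extremePoints ℝ :=
  inter_extremePoints_subset_extremePoints_of_subset hA
    ⟨hx, by rw [extremePoints_pi]; simpa using h01⟩

theorem vectorSpan_eq_span_of_zero_mem {k E : Type*} [Ring k] [AddCommGroup E] [Module k E]
    {s : Set E} (h0 : (0 : E) ∈ s) : vectorSpan k s = Submodule.span k s := by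
  simp [vectorSpan_eq_span_vsub_set_right k h0]

theorem chi_apply_eq_zero_or_one (S : Set V) (u : V) : chi S u = 0 ∨ chi S u = 1 := by
  by_cases hu : u ∈ S <;> simp [chi, hu]

theorem chi_mem_cube (S : Set V) : chi S ∈ univ.pi fun _ => Icc (0 : ℝ) 1 := fun u _ => by
  rcases chi_apply_eq_zero_or_one S u with h | h <;> simp [h]

theorem chi_empty : chi (∅ : Set V) = 0 :=
  indicator_empty _

theorem chi_singleton [DecidableEq V] (a : V) : chi {a} = Pi.single a 1 :=
  Set.indicator_singleton a _

theorem sum_chi_eq_zero_iff [DecidableEq V] [Fintype V] (t : Finset V) (S : Set V) :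
    ∑ u ∈ Finset.univ \ t, chi S u = 0 ↔ S ⊆ t := by
  rw [Finset.sum_eq_zero_iff_of_nonneg fun u _ => (chi_mem_cube S u (mem_univ u)).1]
  simp only [chi, indicator_apply_eq_zero, one_ne_zero, imp_false, Finset.mem_sdiff,
    Finset.mem_univ, true_and]
  exact ⟨fun h u hu => not_not.1 fun hut => h u hut hu, fun h u hut hu => hut (h hu)⟩

theorem polyVerts_subset_range_chi (G : SimpleGraph V) : polyVerts G ⊆ range chi := by
  rintro x (rfl | ⟨a, rfl⟩ | ⟨a, b, -, rfl⟩) <;> exact mem_range_self _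

theorem poly_subset_cube (G : SimpleGraph V) : poly G ⊆ univ.pi fun _ => Icc (0 : ℝ) 1 :=
  convexHull_min
    (fun _ hx => by obtain ⟨S, rfl⟩ := polyVerts_subset_range_chi G hx; exact chi_mem_cube S)
    (convex_pi fun _ _ => convex_Icc 0 1)

theorem nonneg_of_mem_poly {G : SimpleGraph V} {x : V → ℝ} (hx : x ∈ poly G) (u : V) :
    0 ≤ x u :=
  (poly_subset_cube G hx u (mem_univ u)).1

theorem chi_mem_extremePoints_poly {G : SimpleGraph V} {S : Set V} (hS : chi S ∈ polyVerts G) :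
    chi S ∈ (poly G).extremePoints ℝ :=
  mem_extremePoints_of_subset_cube (poly_subset_cube G) (subset_convexHull ℝ _ hS)
    (chi_apply_eq_zero_or_one S)

theorem chi_mem_polyVerts_of_subset_pair {G : SimpleGraph V} {v w : V} (h : G.Adj v w)
    {S : Set V} (hS : S ⊆ {v, w}) : chi S ∈ polyVerts G := by
  rcases subset_pair_iff_eq.1 hS with rfl | rfl | rfl | rfl
  · exact Or.inl rfl
  · exact Or.inr (Or.inl ⟨v, rfl⟩)
  · exact Or.inr (Or.inl ⟨w, rfl⟩)
  · exact Or.inr (Or.inr ⟨v, w, h, rfl⟩)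

theorem image_chi_powerset_pair (v w : V) :
    chi '' 𝒫 {v, w} = {chi ∅, chi {v}, chi {w}, chi {v, w}} := by
  ext x
  constructor
  · rintro ⟨S, hS, rfl⟩
    rcases subset_pair_iff_eq.1 hS with rfl | rfl | rfl | rfl <;> simp
  · rintro (rfl | rfl | rfl | rfl) <;> exact mem_image_of_mem _ (by simp [subset_def])

theorem finrank_span_chi_pair {v w : V} (hvw : v ≠ w) :
    Module.finrank ℝ (Submodule.span ℝ {chi {v}, chi {w}}) = 2 := by
  classical
  have hli : LinearIndependent ℝ ![chi {v}, chi {w}] := by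
    rw [LinearIndependent.pair_iff]
    intro a b hab
    have := congrFun hab v
    have := congrFun hab w
    simp_all [chi_singleton]
  rw [← Matrix.range_cons_cons_empty (chi {v}) (chi {w}) ![], finrank_span_eq_card hli,
    Fintype.card_fin]

section Face

variable [Fintype V] [DecidableEq V]

def sumCoords (s : Finset V) : (V → ℝ) →ₗ[ℝ] ℝ where
  toFun x := ∑ u ∈ s, x u
  map_add' _ _ := Finset.sum_add_distrib
  map_smul' _ _ := by simp [Finset.mul_sum]

def edgeFace (G : SimpleGraph V) (v w : V) : Set (V → ℝ) :=
  {x ∈ poly G | ∑ u ∈ Finset.univ \ {v, w}, x u = 0}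

theorem isExtreme_edgeFace (G : SimpleGraph V) (v w : V) :
    IsExtreme ℝ (poly G) (edgeFace G v w) :=
  isExtreme_setOf_eq_zero (sumCoords _) fun _ hx =>
    Finset.sum_nonneg fun u _ => nonneg_of_mem_poly hx u

theorem chi_mem_edgeFace {G : SimpleGraph V} {v w : V} (h : G.Adj v w) {S : Set V}
    (hS : S ⊆ {v, w}) : chi S ∈ edgeFace G v w :=
  ⟨subset_convexHull ℝ _ (chi_mem_polyVerts_of_subset_pair h hS),
    (sum_chi_eq_zero_iff _ S).2 (by simpa using hS)⟩

theorem edgeFace_inter_extremePoints {G : SimpleGraph V} {v w : V} (h : G.Adj v w) :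
    edgeFace G v w ∩ (poly G).extremePoints ℝ = chi '' 𝒫 {v, w} := by
  ext x
  constructor
  · rintro ⟨⟨-, hx0⟩, hx⟩
    obtain ⟨S, rfl⟩ := polyVerts_subset_range_chi G (extremePoints_convexHull_subset hx)
    exact ⟨S, by simpa using (sum_chi_eq_zero_iff _ S).1 hx0, rfl⟩
  · rintro ⟨S, hS, rfl⟩
    exact ⟨chi_mem_edgeFace h hS,
      chi_mem_extremePoints_poly (chi_mem_polyVerts_of_subset_pair h hS)⟩

theorem eq_smul_chi_add_smul_chi_of_mem_edgeFace {G : SimpleGraph V} {v w : V} (hvw : v ≠ w)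
    {x : V → ℝ} (hx : x ∈ edgeFace G v w) : x = x v • chi {v} + x w • chi {w} := by
  have hzero :=
    (Finset.sum_eq_zero_iff_of_nonneg fun u _ => nonneg_of_mem_poly hx.1 u).1 hx.2
  funext u
  by_cases huv : u = v
  · subst huv; simp [chi_singleton, hvw]
  by_cases huw : u = w
  · subst huw; simp [chi_singleton, Ne.symm hvw]
  simpa [chi_singleton, huv, huw] using hzero u (by simp [huv, huw])

theorem span_edgeFace {G : SimpleGraph V} {v w : V} (h : G.Adj v w) :
    Submodule.span ℝ (edgeFace G v w) = Submodule.span ℝ {chi {v}, chi {w}} := by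
  refine le_antisymm (Submodule.span_le.2 fun x hx => ?_) (Submodule.span_mono ?_)
  · rw [eq_smul_chi_add_smul_chi_of_mem_edgeFace h.ne hx]
    exact add_mem (Submodule.smul_mem _ _ (Submodule.subset_span (by simp)))
      (Submodule.smul_mem _ _ (Submodule.subset_span (by simp)))
  · exact pair_subset (chi_mem_edgeFace h (by simp)) (chi_mem_edgeFace h (by simp))

theorem finrank_direction_affineSpan_edgeFace {G : SimpleGraph V} {v w : V} (h : G.Adj v w) :
    Module.finrank ℝ (affineSpan ℝ (edgeFace G v w)).direction = 2 := by
  have h0 : (0 : V → ℝ) ∈ edgeFace G v w := chi_empty ▸ chi_mem_edgeFace h (empty_subset _)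
  rw [direction_affineSpan, vectorSpan_eq_span_of_zero_mem h0, span_edgeFace h,
    finrank_span_chi_pair h.ne]

end Face

theorem stmt17 [Fintype V] [DecidableEq V] (G : SimpleGraph V) {v w : V}
    (h : G.Adj v w) :
    (∀ x ∈ poly G, 0 ≤ ∑ u ∈ Finset.univ \ {v, w}, x u) ∧
    IsExtreme ℝ (poly G)
      {x ∈ poly G | ∑ u ∈ Finset.univ \ {v, w}, x u = 0} ∧
    {x ∈ poly G | ∑ u ∈ Finset.univ \ {v, w}, x u = 0} ∩
        (poly G).extremePoints ℝ =
      {chi (∅ : Set V), chi ({v} : Set V), chi ({w} : Set V),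
        chi ({v, w} : Set V)} ∧
    Module.finrank ℝ
      (affineSpan ℝ
        {x ∈ poly G | ∑ u ∈ Finset.univ \ {v, w}, x u = 0}).direction = 2 :=
  ⟨fun _ hx => Finset.sum_nonneg fun u _ => nonneg_of_mem_poly hx u,
    isExtreme_edgeFace G v w,
    (edgeFace_inter_extremePoints h).trans (image_chi_powerset_pair v w),
    finrank_direction_affineSpan_edgeFace h⟩
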